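/- Conditional Esakia lemma, second half: under the standing hypotheses on g, let 𝒞 be a down-directed family of closed elements of D with sInf 𝒞 ≤ g(⊤). Then ◆_g(sInf 𝒞) = sInf { ◆_g(c) | c ∈ 𝒞 }. Moreover there exists a down-directed subfamily 𝒞' ⊆ 𝒞 such that sInf 𝒞' = sInf 𝒞, ◆_g(c) is closed in C for every c ∈ 𝒞', and sInf { ◆_g(c) | c ∈ 𝒞' } = sInf { ◆_g(c) | c ∈ 𝒞 }. (Proposition 4.11(2).) -/

import Mathlib

/-- An element is completely join-prime. -/
def CJPrime {C : Type*} [CompleteLattice C] (j : C) : Prop :=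
  j ≠ ⊥ ∧ ∀ S : Set C, j ≤ sSup S → ∃ s ∈ S, j ≤ s

/-- An element is completely meet-prime. -/
def CMPrime {C : Type*} [CompleteLattice C] (m : C) : Prop :=
  m ≠ ⊤ ∧ ∀ S : Set C, sInf S ≤ m → ∃ s ∈ S, s ≤ m

/-- ◇_f(u) = ⋁ { f j | j completely join-prime, j ≤ u }. -/
def diam {C D : Type*} [CompleteLattice C] [CompleteLattice D]
    (f : C → D) (u : C) : D :=
  sSup (f '' {j | CJPrime j ∧ j ≤ u})

/-- ■_f(v) = ⋁ { j | j completely join-prime, f j ≤ v }. -/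
def bsq {C D : Type*} [CompleteLattice C] [CompleteLattice D]
    (f : C → D) (v : D) : C :=
  sSup {j | CJPrime j ∧ f j ≤ v}

/-- □_g(u) = ⋀ { g m | m completely meet-prime, u ≤ m }. -/
def boxg {C D : Type*} [CompleteLattice C] [CompleteLattice D]
    (g : C → D) (u : C) : D :=
  sInf (g '' {m | CMPrime m ∧ u ≤ m})

/-- ◆_g(v) = ⋀ { m | m completely meet-prime, v ≤ g m }. -/
def bdiam {C D : Type*} [CompleteLattice C] [CompleteLattice D]
    (g : C → D) (v : D) : C :=
  sInf {m | CMPrime m ∧ v ≤ g m}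

/-- Every element is the sup of the completely join-primes below it. -/
def JoinPerfect (C : Type*) [CompleteLattice C] : Prop :=
  ∀ u : C, u = sSup {j | CJPrime j ∧ j ≤ u}

/-- Every element is the inf of the completely meet-primes above it. -/
def MeetPerfect (C : Type*) [CompleteLattice C] : Prop :=
  ∀ u : C, u = sInf {m | CMPrime m ∧ u ≤ m}

/-- `(C, e)` is a canonical extension of the bounded distributive lattice `A`. -/
structure IsCanonicalExtension {A C : Type*} [DistribLattice A] [BoundedOrder A]
    [CompleteLattice C] (e : A → C) : Prop where
  injective : Function.Injective e
  map_bot : e ⊥ = ⊥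
  map_top : e ⊤ = ⊤
  map_inf : ∀ a b : A, e (a ⊓ b) = e a ⊓ e b
  map_sup : ∀ a b : A, e (a ⊔ b) = e a ⊔ e b
  dense_joinOfMeets : ∀ u : C, ∃ 𝒮 : Set (Set A),
      u = sSup ((fun S => sInf (e '' S)) '' 𝒮)
  dense_meetOfJoins : ∀ u : C, ∃ 𝒮 : Set (Set A),
      u = sInf ((fun S => sSup (e '' S)) '' 𝒮)
  compact : ∀ S T : Set A, sInf (e '' S) ≤ sSup (e '' T) →
      ∃ F : Finset A, ↑F ⊆ S ∧ ∃ G : Finset A, ↑G ⊆ T ∧ F.inf id ≤ G.sup id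

/-- Closed elements of the canonical extension: meets of subsets of `e(A)`. -/
def ClosedElem {A C : Type*} [CompleteLattice C] (e : A → C) (x : C) : Prop :=
  ∃ S : Set A, x = sInf (e '' S)

/-- Open elements of the canonical extension: joins of subsets of `e(A)`. -/
def OpenElem {A C : Type*} [CompleteLattice C] (e : A → C) (x : C) : Prop :=
  ∃ S : Set A, x = sSup (e '' S)

/-- Nonempty downward-directed family. -/
def DownDir {C : Type*} [Preorder C] (𝒞 : Set C) : Prop :=
  𝒞.Nonempty ∧ ∀ x ∈ 𝒞, ∀ y ∈ 𝒞, ∃ z ∈ 𝒞, z ≤ x ∧ z ≤ y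

/-- Nonempty upward-directed family. -/
def UpDir {C : Type*} [Preorder C] (𝒪 : Set C) : Prop :=
  𝒪.Nonempty ∧ ∀ x ∈ 𝒪, ∀ y ∈ 𝒪, ∃ z ∈ 𝒪, x ≤ z ∧ y ≤ z

/-- `h` preserves down-directed meets of closed elements. -/
def ClosedEsakia {A C D : Type*} [CompleteLattice C] [CompleteLattice D]
    (e : A → C) (h : C → D) : Prop :=
  ∀ 𝒞 : Set C, DownDir 𝒞 → (∀ c ∈ 𝒞, ClosedElem e c) →
    h (sInf 𝒞) = sInf (h '' 𝒞)

/-- `h` preserves up-directed joins of open elements. -/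
def OpenEsakia {A C D : Type*} [CompleteLattice C] [CompleteLattice D]
    (e : A → C) (h : C → D) : Prop :=
  ∀ 𝒪 : Set C, UpDir 𝒪 → (∀ o ∈ 𝒪, OpenElem e o) →
    h (sSup 𝒪) = sSup (h '' 𝒪)

section Directed

variable {P Q : Type*} [Preorder P] [Preorder Q]

lemma downDir_singleton (x : P) : DownDir ({x} : Set P) :=
  ⟨⟨x, rfl⟩, fun _ hy _ hz => ⟨x, rfl, (Set.mem_singleton_iff.1 hy).ge,
    (Set.mem_singleton_iff.1 hz).ge⟩⟩

lemma UpDir.image {f : P → Q} (hf : Monotone f) {𝒪 : Set P} (h𝒪 : UpDir 𝒪) :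
    UpDir (f '' 𝒪) := by
  refine ⟨h𝒪.1.image f, ?_⟩
  rintro _ ⟨x, hx, rfl⟩ _ ⟨y, hy, rfl⟩
  obtain ⟨z, hz, hxz, hyz⟩ := h𝒪.2 x hx y hy
  exact ⟨f z, ⟨z, hz, rfl⟩, hf hxz, hf hyz⟩

end Directed

section CanonicalExtension

variable {A C : Type*} [CompleteLattice C] {e : A → C}

lemma openElem_apply (a : A) : OpenElem e (e a) :=
  ⟨{a}, by simp⟩

lemma ClosedElem.sInf_image_setOf_le {c : C} (hc : ClosedElem e c) :
    sInf (e '' {a | c ≤ e a}) = c := by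
  obtain ⟨S, rfl⟩ := hc
  refine le_antisymm (sInf_le_sInf (Set.image_mono fun a ha => sInf_le ⟨a, ha, rfl⟩)) ?_
  exact le_sInf (by rintro _ ⟨a, ha, rfl⟩; exact ha)

lemma OpenElem.sSup_image_setOf_le {o : C} (ho : OpenElem e o) :
    sSup (e '' {a | e a ≤ o}) = o := by
  obtain ⟨T, rfl⟩ := ho
  refine le_antisymm (sSup_le (by rintro _ ⟨a, ha, rfl⟩; exact ha)) ?_
  exact sSup_le_sSup (Set.image_mono fun a ha => le_sSup ⟨a, ha, rfl⟩)

variable [DistribLattice A] [BoundedOrder A]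

namespace IsCanonicalExtension

variable (hce : IsCanonicalExtension e)
include hce

lemma monotone : Monotone e := fun a b hab =>
  calc e a = e (a ⊓ b) := by rw [inf_eq_left.2 hab]
    _ = e a ⊓ e b := hce.map_inf a b
    _ ≤ e b := inf_le_right

lemma upDir_image_setOf_le (x : C) : UpDir (e '' {a | e a ≤ x}) := by
  refine ⟨⟨e ⊥, ⊥, by simp [hce.map_bot], rfl⟩, ?_⟩
  rintro _ ⟨a, ha, rfl⟩ _ ⟨b, hb, rfl⟩
  refine ⟨e (a ⊔ b), ⟨a ⊔ b, ?_, rfl⟩, hce.monotone le_sup_left,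
    hce.monotone le_sup_right⟩
  simpa [hce.map_sup] using And.intro ha hb

lemma openElem_of_cmprime {m : C} (hm : CMPrime m) : OpenElem e m := by
  obtain ⟨𝒮, h𝒮⟩ := hce.dense_meetOfJoins m
  obtain ⟨_, ⟨S, hS, rfl⟩, hSm⟩ := hm.2 _ h𝒮.ge
  exact ⟨S, le_antisymm (h𝒮 ▸ sInf_le ⟨S, hS, rfl⟩) hSm⟩

/- The meet of `𝒞` is that of the filter `{a | ∃ c ∈ 𝒞, c ≤ e a}` and the join of `𝒪` that of
the ideal `{a | ∃ o ∈ 𝒪, e a ≤ o}`; compactness then yields finitely many elements of each, and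
a finite meet (join) of filter (ideal) elements stays in the filter (ideal). -/
lemma exists_le_of_sInf_le_sSup {𝒞 𝒪 : Set C} (h𝒞 : DownDir 𝒞)
    (h𝒞cl : ∀ c ∈ 𝒞, ClosedElem e c) (h𝒪 : UpDir 𝒪) (h𝒪op : ∀ o ∈ 𝒪, OpenElem e o)
    (hle : sInf 𝒞 ≤ sSup 𝒪) :
    ∃ c ∈ 𝒞, ∃ o ∈ 𝒪, c ≤ o := by
  set S : Set A := {a | ∃ c ∈ 𝒞, c ≤ e a}
  set T : Set A := {a | ∃ o ∈ 𝒪, e a ≤ o}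
  have hS : sInf (e '' S) ≤ sInf 𝒞 := le_sInf fun c hc =>
    have hsub : {a | c ≤ e a} ⊆ S := fun a ha => ⟨c, hc, ha⟩
    (sInf_le_sInf (Set.image_mono hsub)).trans (h𝒞cl c hc).sInf_image_setOf_le.le
  have hT : sSup 𝒪 ≤ sSup (e '' T) := sSup_le fun o ho =>
    have hsub : {a | e a ≤ o} ⊆ T := fun a ha => ⟨o, ho, ha⟩
    (h𝒪op o ho).sSup_image_setOf_le.ge.trans (sSup_le_sSup (Set.image_mono hsub))
  obtain ⟨F, hFS, G, hGT, hFG⟩ := hce.compact S T (hS.trans (hle.trans hT))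
  have hS_inf : F.inf id ∈ S := by
    refine Finset.inf_mem S ?_ ?_ F id fun a ha => hFS ha
    · obtain ⟨c, hc⟩ := h𝒞.1
      exact ⟨c, hc, by simp [hce.map_top]⟩
    · rintro a ⟨c, hc, hca⟩ b ⟨d, hd, hdb⟩
      obtain ⟨z, hz, hzc, hzd⟩ := h𝒞.2 c hc d hd
      exact ⟨z, hz, hce.map_inf a b ▸ le_inf (hzc.trans hca) (hzd.trans hdb)⟩
  have hT_sup : G.sup id ∈ T := by
    refine Finset.sup_mem T ?_ ?_ G id fun a ha => hGT ha
    · obtain ⟨o, ho⟩ := h𝒪.1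
      exact ⟨o, ho, by simp [hce.map_bot]⟩
    · rintro a ⟨o, ho, hao⟩ b ⟨p, hp, hbp⟩
      obtain ⟨z, hz, hoz, hpz⟩ := h𝒪.2 o ho p hp
      exact ⟨z, hz, hce.map_sup a b ▸ sup_le (hao.trans hoz) (hbp.trans hpz)⟩
  obtain ⟨c, hc, hcF⟩ := hS_inf
  obtain ⟨o, ho, hGo⟩ := hT_sup
  exact ⟨c, hc, o, ho, hcF.trans ((hce.monotone hFG).trans hGo)⟩

end IsCanonicalExtension

end CanonicalExtension

section Esakia

variable {A B C D : Type*} [DistribLattice A] [BoundedOrder A] [DistribLattice B]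
  [BoundedOrder B] [CompleteLattice C] [CompleteLattice D] {eA : A → C} {eB : B → D} {g : C → D}

lemma bdiam_mono (g : C → D) : Monotone (bdiam g) := fun _ _ hvw =>
  sInf_le_sInf fun _ hm => ⟨hm.1, hvw.trans hm.2⟩

lemma bdiam_le_of_cmprime {v : D} {m : C} (hm : CMPrime m) (hv : v ≤ g m) : bdiam g v ≤ m :=
  sInf_le ⟨hm, hv⟩

lemma bdiam_le_of_le_map (hCm : MeetPerfect C) (hg : Monotone g) {v : D} {u : C}
    (hv : v ≤ g u) : bdiam g v ≤ u := by
  rw [hCm u]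
  exact le_sInf fun m hm => bdiam_le_of_cmprime hm.1 (hv.trans (hg hm.2))

/- `g m` is the directed join of the open elements `g (eA a)`, `eA a ≤ m`, since `m` is open and
`g` is open Esakia; compactness in `D` then finds one of them above a member of `𝒳`. -/
lemma exists_le_map_of_sInf_le_map (hceA : IsCanonicalExtension eA)
    (hceB : IsCanonicalExtension eB) (hg : Monotone g) (hgoE : OpenEsakia eA g)
    (hop : ∀ a : A, OpenElem eB (g (eA a))) {𝒳 : Set D} (h𝒳 : DownDir 𝒳)
    (h𝒳cl : ∀ x ∈ 𝒳, ClosedElem eB x) {m : C} (hm : CMPrime m) (hle : sInf 𝒳 ≤ g m) :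
    ∃ x ∈ 𝒳, ∃ a, eA a ≤ m ∧ x ≤ g (eA a) := by
  have hdir := hceA.upDir_image_setOf_le m
  have hgm : g m = sSup (g '' (eA '' {a | eA a ≤ m})) := by
    conv_lhs => rw [← (hceA.openElem_of_cmprime hm).sSup_image_setOf_le]
    exact hgoE _ hdir (by rintro _ ⟨a, -, rfl⟩; exact openElem_apply a)
  obtain ⟨x, hx, _, ⟨_, ⟨a, ha, rfl⟩, rfl⟩, hxa⟩ :=
    hceB.exists_le_of_sInf_le_sSup h𝒳 h𝒳cl (hdir.image hg)
      (by rintro _ ⟨_, ⟨a, -, rfl⟩, rfl⟩; exact hop a) (hgm ▸ hle)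
  exact ⟨x, hx, a, ha, hxa⟩

lemma bdiam_sInf_of_downDir (hceA : IsCanonicalExtension eA) (hceB : IsCanonicalExtension eB)
    (hg : Monotone g) (hgoE : OpenEsakia eA g) (hop : ∀ a : A, OpenElem eB (g (eA a)))
    {𝒞 : Set D} (h𝒞 : DownDir 𝒞) (h𝒞cl : ∀ c ∈ 𝒞, ClosedElem eB c) :
    bdiam g (sInf 𝒞) = sInf (bdiam g '' 𝒞) := by
  refine le_antisymm (le_sInf ?_) (le_sInf ?_)
  · rintro _ ⟨c, hc, rfl⟩
    exact bdiam_mono g (sInf_le hc)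
  · rintro m ⟨hm, hle⟩
    obtain ⟨c, hc, a, ham, hca⟩ :=
      exists_le_map_of_sInf_le_map hceA hceB hg hgoE hop h𝒞 h𝒞cl hm hle
    exact (sInf_le (Set.mem_image_of_mem (bdiam g) hc)).trans
      (bdiam_le_of_cmprime hm (hca.trans (hg ham)))

lemma bdiam_eq_sInf_of_closedElem (hceA : IsCanonicalExtension eA)
    (hceB : IsCanonicalExtension eB) (hCm : MeetPerfect C) (hg : Monotone g)
    (hgoE : OpenEsakia eA g) (hop : ∀ a : A, OpenElem eB (g (eA a))) {c : D}
    (hc : ClosedElem eB c) : bdiam g c = sInf (eA '' {a | c ≤ g (eA a)}) := by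
  refine le_antisymm (le_sInf ?_) (le_sInf ?_)
  · rintro _ ⟨a, ha, rfl⟩
    exact bdiam_le_of_le_map hCm hg ha
  · rintro m ⟨hm, hcm⟩
    obtain ⟨_, rfl, a, ham, hca⟩ := exists_le_map_of_sInf_le_map hceA hceB hg hgoE hop
      (downDir_singleton c) (by rintro _ rfl; exact hc) hm (by simpa using hcm)
    exact (sInf_le (Set.mem_image_of_mem eA hca)).trans ham

end Esakia

theorem stmt14_general {A B C D : Type*} [DistribLattice A] [BoundedOrder A]
    [DistribLattice B] [BoundedOrder B] [CompleteLattice C] [CompleteLattice D]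
    (eA : A → C) (eB : B → D)
    (hceA : IsCanonicalExtension eA) (hceB : IsCanonicalExtension eB)
    (hCm : MeetPerfect C)
    (g : C → D) (hg : Monotone g)
    (hgoE : OpenEsakia eA g)
    (hop : ∀ a : A, OpenElem eB (g (eA a)))
    (𝒞 : Set D) (h𝒞dir : DownDir 𝒞) (h𝒞cl : ∀ c ∈ 𝒞, ClosedElem eB c) :
    bdiam g (sInf 𝒞) = sInf (bdiam g '' 𝒞) ∧
    ∃ 𝒞' ⊆ 𝒞, DownDir 𝒞' ∧ sInf 𝒞' = sInf 𝒞 ∧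
      (∀ c ∈ 𝒞', ClosedElem eA (bdiam g c)) ∧
      sInf (bdiam g '' 𝒞') = sInf (bdiam g '' 𝒞) :=
  ⟨bdiam_sInf_of_downDir hceA hceB hg hgoE hop h𝒞dir h𝒞cl, 𝒞, subset_rfl, h𝒞dir, rfl,
    fun c hc => ⟨_, bdiam_eq_sInf_of_closedElem hceA hceB hCm hg hgoE hop (h𝒞cl c hc)⟩, rfl⟩

/-- Proposition 4.11(2), conditional Esakia lemma (second half). -/
theorem stmt14 {A B C D : Type*} [DistribLattice A] [BoundedOrder A]
    [DistribLattice B] [BoundedOrder B] [CompleteLattice C] [CompleteLattice D]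
    (eA : A → C) (eB : B → D)
    (hceA : IsCanonicalExtension eA) (hceB : IsCanonicalExtension eB)
    (hCj : JoinPerfect C) (hCm : MeetPerfect C)
    (hDj : JoinPerfect D) (hDm : MeetPerfect D)
    (g : C → D) (hg : Monotone g)
    (hgcE : ClosedEsakia eA g) (hgoE : OpenEsakia eA g)
    (hop : ∀ a : A, OpenElem eB (g (eA a)))
    (hmul : ∀ a b : A, g (eA a) ⊓ g (eA b) ≤ g (eA (a ⊓ b)))
    (𝒞 : Set D) (h𝒞dir : DownDir 𝒞) (h𝒞cl : ∀ c ∈ 𝒞, ClosedElem eB c)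
    (htop : sInf 𝒞 ≤ g ⊤) :
    bdiam g (sInf 𝒞) = sInf (bdiam g '' 𝒞) ∧
    ∃ 𝒞' ⊆ 𝒞, DownDir 𝒞' ∧ sInf 𝒞' = sInf 𝒞 ∧
      (∀ c ∈ 𝒞', ClosedElem eA (bdiam g c)) ∧
      sInf (bdiam g '' 𝒞') = sInf (bdiam g '' 𝒞) :=
  stmt14_general eA eB hceA hceB hCm g hg hgoE hop 𝒞 h𝒞dir h𝒞cl
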